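/- arXiv:2405.19698 — 2 statements merged into one kernel-verified Lean document; each statement's English description precedes it below -/
import Mathlib

section
/- Let T, S be bounded linear operators on a complex Hilbert space H and t ∈ (0,1). Then w(T*S)² ≤ (1/(2(t+1)))·‖|T|² + |S|²‖·w(T*S) + (t/(4(t+1)))·‖|T|⁴ + |S|⁴‖ + (t/(2(t+1)))·w(|S|²|T|²), and the right-hand side is at most (1/(2(t+1)))·‖|T|² + |S|²‖·w(T*S) + (t/(2(t+1)))·‖|T|⁴ + |S|⁴‖. -/
open scoped InnerProductSpace
open ContinuousLinearMap Finset

variable {H : Type*} [NormedAddCommGroup H] [InnerProductSpace ℂ H] [CompleteSpace H]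

/-- The numerical radius of a bounded operator. -/
noncomputable def numRadius (T : H →L[ℂ] H) : ℝ :=
  sSup ((fun x : H => ‖⟪T x, x⟫_ℂ‖) '' {x : H | ‖x‖ = 1})

/-- The absolute value |T| = (T*T)^(1/2). -/
noncomputable def opAbs (T : H →L[ℂ] H) : H →L[ℂ] H :=
  CFC.sqrt (ContinuousLinearMap.adjoint T * T)

/-- Real power of a (positive) operator via continuous functional calculus. -/
noncomputable def opPow (T : H →L[ℂ] H) (r : ℝ) : H →L[ℂ] H :=
  CFC.rpow T r

lemma numRadius_bddAbove (A : H →L[ℂ] H) :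
    BddAbove ((fun x : H => ‖⟪A x, x⟫_ℂ‖) '' {x : H | ‖x‖ = 1}) := by
  refine ⟨‖A‖, ?_⟩
  rintro - ⟨x, hx, rfl⟩
  calc ‖⟪A x, x⟫_ℂ‖ ≤ ‖A x‖ * ‖x‖ := norm_inner_le_norm _ _
    _ ≤ ‖A‖ * ‖x‖ * ‖x‖ := by
        have := A.le_opNorm x
        simp only [Set.mem_setOf_eq] at hx
        nlinarith [norm_nonneg (A x)]
    _ = ‖A‖ := by simp only [Set.mem_setOf_eq] at hx; simp [hx]

lemma le_numRadius (A : H →L[ℂ] H) {x : H} (hx : ‖x‖ = 1) :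
    ‖⟪A x, x⟫_ℂ‖ ≤ numRadius A :=
  le_csSup (numRadius_bddAbove A) ⟨x, hx, rfl⟩

lemma numRadius_nonneg (A : H →L[ℂ] H) : 0 ≤ numRadius A := by
  apply Real.sSup_nonneg
  rintro - ⟨x, hx, rfl⟩
  positivity

lemma numRadius_le {A : H →L[ℂ] H} {c : ℝ} (hc : 0 ≤ c)
    (h : ∀ x : H, ‖x‖ = 1 → ‖⟪A x, x⟫_ℂ‖ ≤ c) : numRadius A ≤ c := by
  apply Real.sSup_le _ hc
  rintro - ⟨x, hx, rfl⟩
  exact h x hx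

lemma complex_re_le_norm (z : ℂ) : z.re ≤ ‖z‖ := by
  exact Complex.re_le_norm z

lemma complex_abs_re_le_norm (z : ℂ) : |z.re| ≤ ‖z‖ := by
  exact Complex.abs_re_le_norm z

lemma inner_le_numRadius (A : H →L[ℂ] H) (z : H) :
    ‖⟪A z, z⟫_ℂ‖ ≤ numRadius A * ‖z‖ ^ 2 := by
  rcases eq_or_ne z 0 with rfl | hz
  · simp
  · have hnz : ‖z‖ ≠ 0 := norm_ne_zero_iff.mpr hz
    have hpos : (0:ℝ) < ‖z‖ := norm_pos_iff.mpr hz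
    set c : ℂ := ((‖z‖ : ℂ))⁻¹ with hc
    have hcn : ‖c‖ = ‖z‖⁻¹ := by
      simp [hc]
    set u : H := c • z with hu
    have hu1 : ‖u‖ = 1 := by
      rw [hu, norm_smul, hcn, inv_mul_cancel₀ hnz]
    have key := le_numRadius A hu1
    have hAu : A u = c • A z := by rw [hu, map_smul]
    have hval : ‖⟪A u, u⟫_ℂ‖ = ‖z‖⁻¹ * ‖z‖⁻¹ * ‖⟪A z, z⟫_ℂ‖ := by
      rw [hu, hAu, inner_smul_left, inner_smul_right, norm_mul, norm_mul,
        RCLike.norm_conj, hcn]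
      ring
    rw [hval] at key
    have : ‖⟪A z, z⟫_ℂ‖ = (‖z‖⁻¹ * ‖z‖⁻¹ * ‖⟪A z, z⟫_ℂ‖) * ‖z‖ ^ 2 := by
      rw [sq]
      field_simp
    rw [this]
    have h2 : (0:ℝ) < ‖z‖^2 := by positivity
    nlinarith [key, h2]

lemma norm_le_numRadius {A : H →L[ℂ] H} (hA : IsSelfAdjoint A) :
    ‖A‖ ≤ numRadius A := by
  set w := numRadius A with hw
  have hw0 : 0 ≤ w := numRadius_nonneg A
  refine A.opNorm_le_bound hw0 fun x => ?_
  rcases eq_or_ne (A x) 0 with h0 | h0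
  · simp [h0]; positivity
  · have hAx : (0:ℝ) < ‖A x‖ := norm_pos_iff.mpr h0
    have hxne : x ≠ 0 := by
      intro h; apply h0; simp [h]
    have hxpos : (0:ℝ) < ‖x‖ := norm_pos_iff.mpr hxne
    set r : ℝ := ‖x‖ / ‖A x‖ with hr
    have hrpos : 0 < r := div_pos hxpos hAx
    set y : H := ((r : ℂ)) • A x with hy
    have hyn : ‖y‖ = ‖x‖ := by
      rw [hy, norm_smul, Complex.norm_real, Real.norm_eq_abs, abs_of_pos hrpos, hr]
      field_simp
    -- polarization: 4 re⟪A x, y⟫ ≤ 2 w (‖x‖² + ‖y‖²)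
    have hpol : 4 * (⟪A x, y⟫_ℂ).re ≤ 2 * w * (‖x‖^2 + ‖y‖^2) := by
      have hself : ∀ z : H, (⟪A z, z⟫_ℂ).re ≤ w * ‖z‖^2 := fun z =>
        le_trans (complex_re_le_norm _) (inner_le_numRadius A z)
      have hself' : ∀ z : H, -(w * ‖z‖^2) ≤ (⟪A z, z⟫_ℂ).re := fun z => by
        have h1 : ‖⟪A z, z⟫_ℂ‖ ≤ w * ‖z‖^2 := inner_le_numRadius A z
        have h2 := complex_abs_re_le_norm (⟪A z, z⟫_ℂ)
        have := abs_le.mp (le_trans h2 h1)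
        linarith [this.1]
      have hyx : ⟪A y, x⟫_ℂ = (starRingEnd ℂ) ⟪A x, y⟫_ℂ := by
        conv_lhs => rw [← hA.adjoint_eq]
        rw [ContinuousLinearMap.adjoint_inner_left]
        exact (inner_conj_symm y (A x)).symm
      have e1 : (⟪A (x + y), x + y⟫_ℂ).re - (⟪A (x - y), x - y⟫_ℂ).re
          = 4 * (⟪A x, y⟫_ℂ).re := by
        simp only [map_add, map_sub, inner_add_left, inner_add_right,
          inner_sub_left, inner_sub_right, hyx]
        simp [Complex.add_re, Complex.sub_re, Complex.conj_re]
        rw [← inner_conj_symm y (A x), Complex.conj_re]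
        ring
      have e2 : ‖x + y‖^2 + ‖x - y‖^2 = 2 * (‖x‖^2 + ‖y‖^2) := by
        have := parallelogram_law_with_norm ℂ x y
        linarith
      have b1 := hself (x + y)
      have b2 := hself' (x - y)
      nlinarith [b1, b2]
    have hre : (⟪A x, y⟫_ℂ).re = ‖x‖ * ‖A x‖ := by
      rw [hy, inner_smul_right]
      have h3 : ⟪A x, A x⟫_ℂ = ((‖A x‖:ℝ) : ℂ)^2 := inner_self_eq_norm_sq_to_K (A x)
      rw [h3, hr]
      have hAxc : ((‖A x‖:ℝ):ℂ) ≠ 0 := by exact_mod_cast hAx.ne'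
      have : ((‖x‖ / ‖A x‖ : ℝ) : ℂ) * ((‖A x‖:ℝ) : ℂ)^2 = (((‖x‖ * ‖A x‖ : ℝ)) : ℂ) := by
        push_cast
        field_simp
      rw [this, Complex.ofReal_re]
    rw [hre, hyn] at hpol
    nlinarith [hpol, hxpos]

lemma sq_opAbs (T : H →L[ℂ] H) : opAbs T ^ 2 = adjoint T * T := by
  have h : (0 : H →L[ℂ] H) ≤ adjoint T * T := by
    rw [← ContinuousLinearMap.star_eq_adjoint]
    exact star_mul_self_nonneg T
  exact CFC.sq_sqrt _ h

lemma kittaneh (A B : H →L[ℂ] H) :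
    numRadius (adjoint A * B) ≤ ‖adjoint A * A + adjoint B * B‖ / 2 := by
  apply numRadius_le (by positivity)
  intro x hx
  have h1 : ⟪(adjoint A * B) x, x⟫_ℂ = ⟪B x, A x⟫_ℂ := by
    rw [ContinuousLinearMap.mul_apply, adjoint_inner_left]
  have h2 : ((⟪(adjoint A * A + adjoint B * B) x, x⟫_ℂ)).re = ‖A x‖^2 + ‖B x‖^2 := by
    rw [add_apply, inner_add_left, ContinuousLinearMap.mul_apply, ContinuousLinearMap.mul_apply, adjoint_inner_left,
      adjoint_inner_left, inner_self_eq_norm_sq_to_K, inner_self_eq_norm_sq_to_K]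
    norm_cast
  calc ‖⟪(adjoint A * B) x, x⟫_ℂ‖ = ‖⟪B x, A x⟫_ℂ‖ := by rw [h1]
    _ ≤ ‖B x‖ * ‖A x‖ := norm_inner_le_norm _ _
    _ ≤ (‖A x‖^2 + ‖B x‖^2)/2 := by nlinarith [sq_nonneg (‖A x‖ - ‖B x‖)]
    _ = ((⟪(adjoint A * A + adjoint B * B) x, x⟫_ℂ)).re/2 := by rw [h2]
    _ ≤ ‖⟪(adjoint A * A + adjoint B * B) x, x⟫_ℂ‖/2 := by
        linarith [complex_re_le_norm (⟪(adjoint A * A + adjoint B * B) x, x⟫_ℂ)]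
    _ ≤ ‖adjoint A * A + adjoint B * B‖/2 := by
        have h3 : ‖⟪(adjoint A * A + adjoint B * B) x, x⟫_ℂ‖
            ≤ ‖(adjoint A * A + adjoint B * B) x‖ * ‖x‖ := norm_inner_le_norm _ _
        have h4 := (adjoint A * A + adjoint B * B).le_opNorm x
        rw [hx] at h3 h4
        simp only [mul_one] at h3 h4
        linarith


theorem stmt11 (T S : H →L[ℂ] H) (t : ℝ) (ht : t ∈ Set.Ioo (0 : ℝ) 1) :
    numRadius (adjoint T * S) ^ 2
      ≤ (1 / (2 * (t + 1))) * ‖opAbs T ^ 2 + opAbs S ^ 2‖ * numRadius (adjoint T * S)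
        + (t / (4 * (t + 1))) * ‖opAbs T ^ 4 + opAbs S ^ 4‖
        + (t / (2 * (t + 1))) * numRadius (opAbs S ^ 2 * opAbs T ^ 2) ∧
    (1 / (2 * (t + 1))) * ‖opAbs T ^ 2 + opAbs S ^ 2‖ * numRadius (adjoint T * S)
        + (t / (4 * (t + 1))) * ‖opAbs T ^ 4 + opAbs S ^ 4‖
        + (t / (2 * (t + 1))) * numRadius (opAbs S ^ 2 * opAbs T ^ 2)
      ≤ (1 / (2 * (t + 1))) * ‖opAbs T ^ 2 + opAbs S ^ 2‖ * numRadius (adjoint T * S)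
        + (t / (2 * (t + 1))) * ‖opAbs T ^ 4 + opAbs S ^ 4‖ := by
  obtain ⟨ht0, ht1⟩ := ht
  have hu : (0:ℝ) < t + 1 := by linarith
  set p := opAbs T ^ 2 with hp
  set q := opAbs S ^ 2 with hq
  have hpdef : p = adjoint T * T := sq_opAbs T
  have hqdef : q = adjoint S * S := sq_opAbs S
  have hT4 : opAbs T ^ 4 = p ^ 2 := by rw [hp, ← pow_mul]
  have hS4 : opAbs S ^ 4 = q ^ 2 := by rw [hq, ← pow_mul]
  rw [hT4, hS4]
  have hpsa : IsSelfAdjoint p := by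
    rw [hpdef, ← ContinuousLinearMap.star_eq_adjoint]
    exact IsSelfAdjoint.star_mul_self T
  have hqsa : IsSelfAdjoint q := by
    rw [hqdef, ← ContinuousLinearMap.star_eq_adjoint]
    exact IsSelfAdjoint.star_mul_self S
  set w := numRadius (adjoint T * S) with hwdef
  set w2 := numRadius (q * p) with hw2def
  set N := ‖p + q‖ with hN
  set M := ‖p ^ 2 + q ^ 2‖ with hM
  have hw0 : 0 ≤ w := numRadius_nonneg _
  have hw20 : 0 ≤ w2 := numRadius_nonneg _
  have hN0 : 0 ≤ N := norm_nonneg _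
  have hM0 : 0 ≤ M := norm_nonneg _
  have h1 : w ≤ N / 2 := by
    have := kittaneh T S
    rw [← hpdef, ← hqdef] at this
    exact this
  have h2 : w2 ≤ M / 2 := by
    have := kittaneh q p
    rw [hpsa.adjoint_eq, hqsa.adjoint_eq, ← sq, ← sq, add_comm (q^2) (p^2)] at this
    exact this
  have h3 : N ^ 2 ≤ M + 2 * w2 := by
    have hasa : IsSelfAdjoint (p + q) := hpsa.add hqsa
    have hsq : N ^ 2 = ‖(p + q) * (p + q)‖ := by
      have h5 : ‖star (p + q) * (p + q)‖ = ‖p + q‖ * ‖p + q‖ := CStarRing.norm_star_mul_self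
      rw [hasa.star_eq] at h5
      rw [hN, sq, ← h5]
    have hexp : (p + q) * (p + q) = (p ^ 2 + q ^ 2) + (p * q + q * p) := by noncomm_ring
    have hXsa : IsSelfAdjoint (p * q + q * p) := by
      rw [isSelfAdjoint_iff, star_add, star_mul, star_mul, hpsa.star_eq, hqsa.star_eq, add_comm]
    have hadj : p * q = adjoint (q * p) := by
      rw [← ContinuousLinearMap.star_eq_adjoint, star_mul, hpsa.star_eq, hqsa.star_eq]
    have hXw : numRadius (p * q + q * p) ≤ 2 * w2 := by
      apply numRadius_le (by positivity)
      intro x hx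
      have e1 : ⟪(p * q + q * p) x, x⟫_ℂ = ⟪(p * q) x, x⟫_ℂ + ⟪(q * p) x, x⟫_ℂ := by
        rw [add_apply, inner_add_left]
      have e2 : ‖⟪(p * q) x, x⟫_ℂ‖ = ‖⟪(q * p) x, x⟫_ℂ‖ := by
        rw [hadj, ContinuousLinearMap.adjoint_inner_left, ← inner_conj_symm]
        exact RCLike.norm_conj _
      calc ‖⟪(p * q + q * p) x, x⟫_ℂ‖
          ≤ ‖⟪(p * q) x, x⟫_ℂ‖ + ‖⟪(q * p) x, x⟫_ℂ‖ := by rw [e1]; exact norm_add_le _ _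
        _ ≤ w2 + w2 := by
            rw [e2]
            have := le_numRadius (q * p) hx
            rw [← hw2def] at this
            linarith
        _ = 2 * w2 := by ring
    have hXn : ‖p * q + q * p‖ ≤ 2 * w2 := le_trans (norm_le_numRadius hXsa) hXw
    calc N ^ 2 = ‖(p ^ 2 + q ^ 2) + (p * q + q * p)‖ := by rw [hsq, hexp]
      _ ≤ M + ‖p * q + q * p‖ := norm_add_le _ _
      _ ≤ M + 2 * w2 := by linarith
  constructor
  · have key : 4 * (t + 1) * w ^ 2 ≤ 2 * N * w + t * M + 2 * t * w2 := by
      have k1 : w * w ≤ (N / 2) * w := mul_le_mul_of_nonneg_right h1 hw0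
      have k2 : N * w ≤ N * (N / 2) := mul_le_mul_of_nonneg_left h1 hN0
      have k3 : N * N ≤ M + 2 * w2 := by nlinarith [h3]
      nlinarith [k1, k2, k3, mul_le_mul_of_nonneg_left k1 ht0.le,
        mul_le_mul_of_nonneg_left k2 ht0.le, mul_le_mul_of_nonneg_left k3 ht0.le]
    have expand : (1 / (2 * (t + 1))) * N * w + (t / (4 * (t + 1))) * M
        + (t / (2 * (t + 1))) * w2 = (2 * N * w + t * M + 2 * t * w2) / (4 * (t + 1)) := by
      field_simp
      ring
    rw [expand, le_div_iff₀ (by positivity)]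
    nlinarith [key]
  · have hm : t / (2 * (t + 1)) * w2 ≤ t / (2 * (t + 1)) * (M / 2) :=
      mul_le_mul_of_nonneg_left h2 (by positivity)
    have he : t / (2 * (t + 1)) * (M / 2) = t / (4 * (t + 1)) * M := by
      rw [div_mul_eq_mul_div, div_mul_eq_mul_div, div_eq_div_iff (by positivity) (by positivity)]
      ring
    linarith [hm, he.le]
end

section
/- Let T be a bounded linear operator on a complex Hilbert space H and c > 0. Then w(T)⁴ ≤ (c/(16(1+c)))·‖|T|⁴ + |T*|⁴‖ + (c/(8(1+c)))·w(|T*|²|T|²) + (c/(4(1+c)))·w(T²)² + (c/(4(1+c)))·‖|T|² + |T*|²‖·w(T²) + (1/(4(1+c)))·w(T)²·‖|T|² + |T*|²‖ + (1/(2(1+c)))·w(T)²·w(T²). -/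
set_option maxHeartbeats 1000000
set_option linter.unusedSectionVars false


open scoped InnerProductSpace
open ContinuousLinearMap Finset

variable {H : Type*} [NormedAddCommGroup H] [InnerProductSpace ℂ H] [CompleteSpace H]

lemma nr_bdd (T : H →L[ℂ] H) :
    BddAbove ((fun x : H => ‖⟪T x, x⟫_ℂ‖) '' {x : H | ‖x‖ = 1}) := by
  refine ⟨‖T‖, ?_⟩
  rintro _ ⟨x, hx, rfl⟩
  calc ‖⟪T x, x⟫_ℂ‖ ≤ ‖T x‖ * ‖x‖ := norm_inner_le_norm _ _
    _ ≤ ‖T‖ * ‖x‖ * ‖x‖ := by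
        have := T.le_opNorm x
        have h0 : (0:ℝ) ≤ ‖x‖ := norm_nonneg _
        nlinarith
    _ = ‖T‖ := by rw [Set.mem_setOf_eq] at hx; rw [hx]; ring

lemma nr_nonneg (T : H →L[ℂ] H) : 0 ≤ numRadius T :=
  Real.sSup_nonneg (by rintro _ ⟨x, hx, rfl⟩; positivity)

lemma nr_ge (T : H →L[ℂ] H) {x : H} (hx : ‖x‖ = 1) : ‖⟪T x, x⟫_ℂ‖ ≤ numRadius T :=
  le_csSup (nr_bdd T) ⟨x, hx, rfl⟩

lemma nr_le (T : H →L[ℂ] H) {r : ℝ} (hr : 0 ≤ r)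
    (h : ∀ x : H, ‖x‖ = 1 → ‖⟪T x, x⟫_ℂ‖ ≤ r) : numRadius T ≤ r :=
  Real.sSup_le (by rintro _ ⟨x, hx, rfl⟩; exact h x hx) hr

lemma nr_quad (T : H →L[ℂ] H) (x : H) : ‖⟪T x, x⟫_ℂ‖ ≤ numRadius T * ‖x‖ ^ 2 := by
  rcases eq_or_ne x 0 with rfl | hx
  · simp
  · have hn : ‖x‖ ≠ 0 := norm_ne_zero_iff.mpr hx
    set u : H := (‖x‖ : ℂ)⁻¹ • x with hu
    have hun : ‖u‖ = 1 := by
      rw [hu, norm_smul]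
      simp [hn]
    have key : ⟪T u, u⟫_ℂ = ((‖x‖:ℂ)⁻¹ * (starRingEnd ℂ) (‖x‖:ℂ)⁻¹) * ⟪T x, x⟫_ℂ := by
      simp only [hu, map_smul, inner_smul_left, inner_smul_right]
      ring
    have := nr_ge T hun
    rw [key] at this
    have hc : ‖(‖x‖:ℂ)⁻¹ * (starRingEnd ℂ) (‖x‖:ℂ)⁻¹‖ = (‖x‖^2)⁻¹ := by
      rw [norm_mul, norm_inv, RingHomIsometric.norm_map, norm_inv]
      simp [Complex.norm_real, sq]
      try ring
    rw [norm_mul, hc] at this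
    have h2 : (0:ℝ) < ‖x‖^2 := by positivity
    calc ‖⟪T x, x⟫_ℂ‖ = ((‖x‖^2)⁻¹ * ‖⟪T x, x⟫_ℂ‖) * ‖x‖^2 := by field_simp
      _ ≤ numRadius T * ‖x‖^2 := by nlinarith

lemma nr_add (P Q : H →L[ℂ] H) : numRadius (P + Q) ≤ numRadius P + numRadius Q := by
  refine nr_le _ (add_nonneg (nr_nonneg P) (nr_nonneg Q)) fun x hx => ?_
  have : ⟪(P + Q) x, x⟫_ℂ = ⟪P x, x⟫_ℂ + ⟪Q x, x⟫_ℂ := by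
    simp [inner_add_left]
  rw [this]
  exact (norm_add_le _ _).trans (add_le_add (nr_ge P hx) (nr_ge Q hx))

lemma nr_adjoint (P : H →L[ℂ] H) : numRadius (adjoint P) = numRadius P := by
  unfold numRadius
  congr 1
  apply Set.image_congr
  intro x _
  rw [adjoint_inner_left, ← inner_conj_symm]
  exact RCLike.norm_conj _

lemma selfadj_norm_le {Y : H →L[ℂ] H} (hY : IsSelfAdjoint Y) : ‖Y‖ ≤ numRadius Y := by
  have hadj : adjoint Y = Y := by rw [← star_eq_adjoint]; exact hY
  refine opNorm_le_bound Y (nr_nonneg Y) fun x => ?_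
  rcases eq_or_ne (Y x) 0 with h0 | h0
  · rw [h0]; simpa using mul_nonneg (nr_nonneg Y) (norm_nonneg x)
  · have hYx : (0:ℝ) < ‖Y x‖ := norm_pos_iff.mpr h0
    set y : H := ((‖x‖ / ‖Y x‖ : ℝ) : ℂ) • Y x with hy
    have hny : ‖y‖ = ‖x‖ := by
      rw [hy, norm_smul]
      simp [abs_div, abs_of_nonneg (norm_nonneg x), abs_of_pos hYx]
      field_simp
    have hsym : ⟪Y y, x⟫_ℂ = (starRingEnd ℂ) ⟪Y x, y⟫_ℂ := by
      have h1 : ⟪Y y, x⟫_ℂ = ⟪y, Y x⟫_ℂ := by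
        conv_lhs => rw [← hadj]
        exact adjoint_inner_left Y x y
      rw [h1]
      exact (inner_conj_symm _ _).symm
    have hre : 4 * Complex.re ⟪Y x, y⟫_ℂ
        = Complex.re ⟪Y (x + y), x + y⟫_ℂ - Complex.re ⟪Y (x - y), x - y⟫_ℂ := by
      have e1 : ⟪Y (x + y), x + y⟫_ℂ - ⟪Y (x - y), x - y⟫_ℂ
          = 2 * ⟪Y x, y⟫_ℂ + 2 * ⟪Y y, x⟫_ℂ := by
        simp only [map_add, map_sub, inner_add_left, inner_add_right,
          inner_sub_left, inner_sub_right]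
        ring
      have e2 : Complex.re (⟪Y (x + y), x + y⟫_ℂ - ⟪Y (x - y), x - y⟫_ℂ)
          = 2 * Complex.re ⟪Y x, y⟫_ℂ + 2 * Complex.re ⟪Y y, x⟫_ℂ := by
        rw [e1]; simp
      rw [Complex.sub_re] at e2
      rw [e2, hsym, Complex.conj_re]
      ring
    have b1 : Complex.re ⟪Y (x + y), x + y⟫_ℂ ≤ numRadius Y * ‖x + y‖ ^ 2 :=
      (Complex.re_le_norm _).trans (nr_quad Y (x + y))
    have b2 : -Complex.re ⟪Y (x - y), x - y⟫_ℂ ≤ numRadius Y * ‖x - y‖ ^ 2 := by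
      have h5 : |Complex.re ⟪Y (x - y), x - y⟫_ℂ| ≤ ‖⟪Y (x - y), x - y⟫_ℂ‖ := by
        exact Complex.abs_re_le_norm _
      have h6 := nr_quad Y (x - y)
      have h7 := neg_le_abs (Complex.re ⟪Y (x - y), x - y⟫_ℂ)
      linarith
    have hpar : ‖x + y‖ ^ 2 + ‖x - y‖ ^ 2 = 2 * (‖x‖ ^ 2 + ‖y‖ ^ 2) := by
      have := parallelogram_law_with_norm ℂ x y
      nlinarith [norm_nonneg (x+y), norm_nonneg (x-y), norm_nonneg x, norm_nonneg y]
    have hval : Complex.re ⟪Y x, y⟫_ℂ = ‖x‖ * ‖Y x‖ := by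
      rw [hy, inner_smul_right]
      have hre2 : RCLike.re ⟪Y x, Y x⟫_ℂ = ‖Y x‖ ^ 2 := inner_self_eq_norm_sq (Y x)
      have : Complex.re (((‖x‖ / ‖Y x‖ : ℝ) : ℂ) * ⟪Y x, Y x⟫_ℂ)
          = (‖x‖ / ‖Y x‖) * Complex.re ⟪Y x, Y x⟫_ℂ := by
        simp
      have hre2' : (⟪Y x, Y x⟫_ℂ).re = ‖Y x‖ ^ 2 := hre2
      rw [this, hre2']
      field_simp
    have : 4 * (‖x‖ * ‖Y x‖) ≤ numRadius Y * (2 * (‖x‖^2 + ‖y‖^2)) := by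
      rw [← hval, ← hpar]
      have := nr_nonneg Y
      nlinarith [b1, b2, hre]
    rw [hny] at this
    rcases eq_or_ne x 0 with rfl | hx0
    · simpa using mul_nonneg (nr_nonneg Y) (norm_nonneg (0:H))
    · have hxp : (0:ℝ) < ‖x‖ := norm_pos_iff.mpr hx0
      nlinarith [nr_nonneg Y]

lemma buzano (a b e : H) (he : ‖e‖ = 1) :
    ‖⟪a, e⟫_ℂ * ⟪e, b⟫_ℂ‖ ≤ (‖a‖ * ‖b‖ + ‖⟪a, b⟫_ℂ‖) / 2 := by
  set R : H := (2 * ⟪e, b⟫_ℂ) • e - b with hR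
  have hnR : ‖R‖ = ‖b‖ := by
    have h2 : ‖R‖ ^ 2 = ‖b‖ ^ 2 := by
      rw [hR, @norm_sub_sq ℂ]
      rw [inner_smul_left, norm_smul, he]
      have hcc : (starRingEnd ℂ) (2 * ⟪e, b⟫_ℂ) * ⟪e, b⟫_ℂ
          = ((2 * ‖⟪e, b⟫_ℂ‖ ^ 2 : ℝ) : ℂ) := by
        rw [map_mul, Complex.conj_ofNat, mul_assoc,
          mul_comm ((starRingEnd ℂ) ⟪e, b⟫_ℂ) ⟪e, b⟫_ℂ, Complex.mul_conj]
        rw [Complex.sq_norm]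
        push_cast
        ring
      rw [hcc]
      simp [norm_mul, ← Complex.ofReal_pow, Complex.ofReal_re]
      ring
    nlinarith [norm_nonneg R, norm_nonneg b]
  have key : 2 * (⟪a, e⟫_ℂ * ⟪e, b⟫_ℂ) = ⟪a, R⟫_ℂ + ⟪a, b⟫_ℂ := by
    rw [hR, inner_sub_right, inner_smul_right]
    ring
  have h1 : ‖(2:ℂ) * (⟪a, e⟫_ℂ * ⟪e, b⟫_ℂ)‖ ≤ ‖a‖ * ‖b‖ + ‖⟪a, b⟫_ℂ‖ := by
    rw [key]
    calc ‖⟪a, R⟫_ℂ + ⟪a, b⟫_ℂ‖ ≤ ‖⟪a, R⟫_ℂ‖ + ‖⟪a, b⟫_ℂ‖ := norm_add_le _ _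
      _ ≤ ‖a‖ * ‖R‖ + ‖⟪a, b⟫_ℂ‖ := by gcongr; exact norm_inner_le_norm _ _
      _ = ‖a‖ * ‖b‖ + ‖⟪a, b⟫_ℂ‖ := by rw [hnR]
  rw [norm_mul] at h1
  simp only [Complex.norm_ofNat] at h1
  linarith

lemma aok (T : H →L[ℂ] H) :
    numRadius T ^ 2 ≤ 1/2 * numRadius (T ^ 2) + 1/4 * ‖adjoint T * T + T * adjoint T‖ := by
  set r : ℝ := 1/2 * numRadius (T ^ 2) + 1/4 * ‖adjoint T * T + T * adjoint T‖ with hrdef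
  have hr : 0 ≤ r := by
    have := nr_nonneg (T ^ 2)
    have := norm_nonneg (adjoint T * T + T * adjoint T)
    rw [hrdef]; linarith
  have h : numRadius T ≤ Real.sqrt r := by
    refine nr_le _ (Real.sqrt_nonneg _) fun x hx => ?_
    rw [show ‖⟪T x, x⟫_ℂ‖ = Real.sqrt (‖⟪T x, x⟫_ℂ‖ ^ 2) by
      rw [Real.sqrt_sq (norm_nonneg _)]]
    refine Real.sqrt_le_sqrt ?_
    -- buzano with a = T x, e = x, b = adjoint T x
    have hb := buzano (T x) (adjoint T x) x hx
    have e1 : ⟪x, adjoint T x⟫_ℂ = ⟪T x, x⟫_ℂ := adjoint_inner_right T x x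
    have e2 : ⟪T x, adjoint T x⟫_ℂ = ⟪(T ^ 2) x, x⟫_ℂ := by
      rw [adjoint_inner_right]
      congr 1
    rw [e1, e2] at hb
    have hb' : ‖⟪T x, x⟫_ℂ‖ ^ 2 ≤ (‖T x‖ * ‖adjoint T x‖ + ‖⟪(T ^ 2) x, x⟫_ℂ‖) / 2 := by
      calc ‖⟪T x, x⟫_ℂ‖ ^ 2 = ‖⟪T x, x⟫_ℂ * ⟪T x, x⟫_ℂ‖ := by rw [norm_mul]; ring
        _ ≤ _ := hb
    have hw2 : ‖⟪(T ^ 2) x, x⟫_ℂ‖ ≤ numRadius (T ^ 2) := nr_ge _ hx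
    have hS : ‖T x‖ ^ 2 + ‖adjoint T x‖ ^ 2 ≤ ‖adjoint T * T + T * adjoint T‖ := by
      have e3 : Complex.re ⟪(adjoint T * T + T * adjoint T) x, x⟫_ℂ
          = ‖T x‖ ^ 2 + ‖adjoint T x‖ ^ 2 := by
        have : (adjoint T * T + T * adjoint T) x = adjoint T (T x) + T (adjoint T x) := rfl
        rw [this, inner_add_left]
        have e4 : ⟪adjoint T (T x), x⟫_ℂ = ⟪T x, T x⟫_ℂ := adjoint_inner_left T x (T x)
        have e5 : ⟪T (adjoint T x), x⟫_ℂ = ⟪adjoint T x, adjoint T x⟫_ℂ := by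
          set A' : H →L[ℂ] H := adjoint T with hA'
          have hT : T = adjoint A' := by rw [hA', adjoint_adjoint]
          rw [hT]
          exact adjoint_inner_left A' x (A' x)
        rw [Complex.add_re, e4, e5]
        have := inner_self_eq_norm_sq (𝕜 := ℂ) (T x)
        have := inner_self_eq_norm_sq (𝕜 := ℂ) (adjoint T x)
        simp only [RCLike.re_to_complex] at *
        linarith
      calc ‖T x‖ ^ 2 + ‖adjoint T x‖ ^ 2
          = Complex.re ⟪(adjoint T * T + T * adjoint T) x, x⟫_ℂ := e3.symm
        _ ≤ ‖⟪(adjoint T * T + T * adjoint T) x, x⟫_ℂ‖ := Complex.re_le_norm _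
        _ ≤ ‖(adjoint T * T + T * adjoint T) x‖ * ‖x‖ := norm_inner_le_norm _ _
        _ ≤ ‖adjoint T * T + T * adjoint T‖ * ‖x‖ * ‖x‖ := by
            gcongr
            exact le_opNorm _ x
        _ = ‖adjoint T * T + T * adjoint T‖ := by rw [hx]; ring
    have hprod : ‖T x‖ * ‖adjoint T x‖ ≤ (‖T x‖ ^ 2 + ‖adjoint T x‖ ^ 2) / 2 := by
      nlinarith [sq_nonneg (‖T x‖ - ‖adjoint T x‖)]
    rw [hrdef]
    linarith
  calc numRadius T ^ 2 ≤ Real.sqrt r ^ 2 := by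
        gcongr
        exact nr_nonneg T
    _ = r := Real.sq_sqrt hr

lemma key2 (A B : H →L[ℂ] H) (hA : IsSelfAdjoint A) (hB : IsSelfAdjoint B) :
    ‖A + B‖ ^ 2 ≤ ‖A ^ 2 + B ^ 2‖ + 2 * numRadius (B * A) := by
  have hS : IsSelfAdjoint (A + B) := hA.add hB
  have c1 : ‖A + B‖ ^ 2 = ‖(A + B) * (A + B)‖ := by
    have hcs := CStarRing.norm_star_mul_self (x := A + B)
    rw [hS.star_eq] at hcs
    rw [hcs]
    ring
  have expand : (A + B) * (A + B) = (A ^ 2 + B ^ 2) + (A * B + B * A) := by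
    simp only [pow_two]
    noncomm_ring
  have h3 : ‖A * B + B * A‖ ≤ 2 * numRadius (B * A) := by
    have hsa : IsSelfAdjoint (A * B + B * A) := by
      rw [IsSelfAdjoint, star_add, star_mul, star_mul, hA.star_eq, hB.star_eq]
      abel
    have h4 : numRadius (A * B) = numRadius (B * A) := by
      have hadj : adjoint (B * A) = A * B := by
        rw [← star_eq_adjoint, star_mul, hA.star_eq, hB.star_eq]
      rw [← hadj, nr_adjoint]
    calc ‖A * B + B * A‖ ≤ numRadius (A * B + B * A) := selfadj_norm_le hsa
      _ ≤ numRadius (A * B) + numRadius (B * A) := nr_add _ _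
      _ = 2 * numRadius (B * A) := by rw [h4]; ring
  calc ‖A + B‖ ^ 2 = ‖(A ^ 2 + B ^ 2) + (A * B + B * A)‖ := by rw [c1, expand]
    _ ≤ ‖A ^ 2 + B ^ 2‖ + ‖A * B + B * A‖ := norm_add_le _ _
    _ ≤ ‖A ^ 2 + B ^ 2‖ + 2 * numRadius (B * A) := by linarith

theorem stmt17 (T : H →L[ℂ] H) (c : ℝ) (hc : 0 < c) :
    numRadius T ^ 4
      ≤ c / (16 * (1 + c)) * ‖opAbs T ^ 4 + opAbs (adjoint T) ^ 4‖
        + c / (8 * (1 + c)) * numRadius (opAbs (adjoint T) ^ 2 * opAbs T ^ 2)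
        + c / (4 * (1 + c)) * numRadius (T ^ 2) ^ 2
        + c / (4 * (1 + c)) * (‖opAbs T ^ 2 + opAbs (adjoint T) ^ 2‖ * numRadius (T ^ 2))
        + 1 / (4 * (1 + c)) * (numRadius T ^ 2 * ‖opAbs T ^ 2 + opAbs (adjoint T) ^ 2‖)
        + 1 / (2 * (1 + c)) * (numRadius T ^ 2 * numRadius (T ^ 2)) := by
  have hTT : (0 : H →L[ℂ] H) ≤ adjoint T * T := by
    rw [← star_eq_adjoint]; exact star_mul_self_nonneg T
  have hTT' : (0 : H →L[ℂ] H) ≤ T * adjoint T := by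
    rw [show T * adjoint T = star (adjoint T) * adjoint T by
      rw [star_eq_adjoint, adjoint_adjoint]]
    exact star_mul_self_nonneg _
  have hA2 : opAbs T ^ 2 = adjoint T * T := by
    unfold opAbs; exact CFC.sq_sqrt _ hTT
  have hB2 : opAbs (adjoint T) ^ 2 = T * adjoint T := by
    unfold opAbs; rw [adjoint_adjoint]; exact CFC.sq_sqrt _ hTT'
  have h4A : opAbs T ^ 4 = (adjoint T * T) ^ 2 := by
    rw [show (4 : ℕ) = 2 * 2 from rfl, pow_mul, hA2]
  have h4B : opAbs (adjoint T) ^ 4 = (T * adjoint T) ^ 2 := by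
    rw [show (4 : ℕ) = 2 * 2 from rfl, pow_mul, hB2]
  rw [h4A, h4B, hA2, hB2]
  have hselfA : IsSelfAdjoint (adjoint T * T) := by
    rw [IsSelfAdjoint, star_mul, star_eq_adjoint, star_eq_adjoint, adjoint_adjoint]
  have hselfB : IsSelfAdjoint (T * adjoint T) := by
    rw [IsSelfAdjoint, star_mul, star_eq_adjoint, star_eq_adjoint, adjoint_adjoint]
  have h1 := aok T
  have h2 := key2 (adjoint T * T) (T * adjoint T) hselfA hselfB
  have hw : 0 ≤ numRadius T := nr_nonneg T
  have hw2 : 0 ≤ numRadius (T ^ 2) := nr_nonneg (T ^ 2)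
  have hN : 0 ≤ ‖adjoint T * T + T * adjoint T‖ := norm_nonneg _
  have hM : 0 ≤ ‖(adjoint T * T) ^ 2 + (T * adjoint T) ^ 2‖ := norm_nonneg _
  have hq : 0 ≤ numRadius (T * adjoint T * (adjoint T * T)) := nr_nonneg _
  have hP : numRadius T ^ 4
      ≤ 1/4 * numRadius (T ^ 2) ^ 2
        + 1/4 * (‖adjoint T * T + T * adjoint T‖ * numRadius (T ^ 2))
        + 1/16 * ‖(adjoint T * T) ^ 2 + (T * adjoint T) ^ 2‖
        + 1/8 * numRadius (T * adjoint T * (adjoint T * T)) := by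
    have hsq := mul_self_le_mul_self (sq_nonneg (numRadius T)) h1
    nlinarith [hsq, h2, hw2, hN]
  have hQ : numRadius T ^ 4
      ≤ 1/2 * (numRadius T ^ 2 * numRadius (T ^ 2))
        + 1/4 * (numRadius T ^ 2 * ‖adjoint T * T + T * adjoint T‖) := by
    nlinarith [mul_le_mul_of_nonneg_left h1 (sq_nonneg (numRadius T))]
  have h1c : (0:ℝ) < 1 + c := by linarith
  have key : numRadius T ^ 4
      ≤ c / (1 + c) * (1/4 * numRadius (T ^ 2) ^ 2
          + 1/4 * (‖adjoint T * T + T * adjoint T‖ * numRadius (T ^ 2))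
          + 1/16 * ‖(adjoint T * T) ^ 2 + (T * adjoint T) ^ 2‖
          + 1/8 * numRadius (T * adjoint T * (adjoint T * T)))
        + 1 / (1 + c) * (1/2 * (numRadius T ^ 2 * numRadius (T ^ 2))
          + 1/4 * (numRadius T ^ 2 * ‖adjoint T * T + T * adjoint T‖)) := by
    have e : numRadius T ^ 4
        = c / (1 + c) * numRadius T ^ 4 + 1 / (1 + c) * numRadius T ^ 4 := by
      field_simp
      ring
    calc numRadius T ^ 4
        = c / (1 + c) * numRadius T ^ 4 + 1 / (1 + c) * numRadius T ^ 4 := e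
      _ ≤ _ := add_le_add
          (mul_le_mul_of_nonneg_left hP (by positivity))
          (mul_le_mul_of_nonneg_left hQ (by positivity))
  calc numRadius T ^ 4 ≤ _ := key
    _ = _ := by
      field_simp
      ring
end
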